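/- Let E be a full heap over A, where P is finite (every full heap is a simply folded full heap in the sense of the paper). Then for each p in P the map I |-> S_p(I) is a well-defined permutation of the set B of proper ideals of E, these permutations satisfy the defining relations of the Weyl group W = W(A), so that there is a unique action of W on B with s_p · I = S_p(I) for all p; moreover this action of W on B is transitive. -/

import Mathlib

/-- Two vertices of the Dynkin diagram are adjacent if they are distinct
and the corresponding entry of the generalized Cartan matrix is nonzero. -/
def Adj {P : Type*} (A : P → P → ℤ) (p q : P) : Prop := p ≠ q ∧ A p q ≠ 0

/-- A generalized Cartan matrix with all entries in {2, 0, -1, -2}. -/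
def IsGCM {P : Type*} (A : P → P → ℤ) : Prop :=
  (∀ p, A p p = 2) ∧ (∀ p q, p ≠ q → A p q ≤ 0) ∧
  (∀ p q, (A p q = 0 ↔ A q p = 0)) ∧
  (∀ p q, A p q = 2 ∨ A p q = 0 ∨ A p q = -1 ∨ A p q = -2)

/-- An ideal (downward-closed subset) of a partially ordered set. -/
def IsIdeal {E : Type*} [PartialOrder E] (F : Set E) : Prop :=
  ∀ ⦃x : E⦄, x ∈ F → ∀ ⦃y : E⦄, y ≤ x → y ∈ F

/-- A proper ideal: an ideal meeting each fibre `eps ⁻¹ {p}` in a nonempty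
proper subset. -/
def IsProperIdeal {P E : Type*} [PartialOrder E] (eps : E → P) (F : Set E) : Prop :=
  IsIdeal F ∧ ∀ p : P, (∃ a, eps a = p ∧ a ∈ F) ∧ (∃ a, eps a = p ∧ a ∉ F)

/-- A full heap over the generalized Cartan matrix `A` with labelling map `eps`.
Local finiteness is expressed by the `LocallyFiniteOrder` instance. -/
structure IsFullHeap {P E : Type*} [PartialOrder E] [LocallyFiniteOrder E]
    (A : P → P → ℤ) (eps : E → P) : Prop where
  /-- elements with equal or adjacent labels are comparable -/
  comparable : ∀ a b : E, (eps a = eps b ∨ Adj A (eps a) (eps b)) → a ≤ b ∨ b ≤ a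
  /-- the order is the reflexive-transitive closure of its restriction to
  pairs with equal or adjacent labels -/
  le_generated : ∀ a b : E, a ≤ b ↔
    Relation.ReflTransGen (fun x y : E => x ≤ y ∧ (eps x = eps y ∨ Adj A (eps x) (eps y))) a b
  /-- each fibre is unbounded above in E -/
  unbounded_above : ∀ (p : P) (a : E), ∃ b, eps b = p ∧ ¬ b ≤ a
  /-- each fibre is unbounded below in E -/
  unbounded_below : ∀ (p : P) (a : E), ∃ b, eps b = p ∧ ¬ a ≤ b
  /-- covering elements with adjacent labels exist -/
  covers : ∀ p p' : P, Adj A p p' → ∀ a : E, eps a = p →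
    ∃ b, eps b = p' ∧ (a ⋖ b ∨ b ⋖ a)
  /-- the defining condition on open intervals between consecutive elements
  of a fibre -/
  interval : ∀ a b : E, a < b → eps a = eps b →
    (∀ c, a < c → c < b → eps c ≠ eps a) →
    (∑ c ∈ Finset.Ioo a b, A (eps a) (eps c)) = -2

/-- The character of a pair of proper ideals:
`chi(F, F')(p) = |(F' \ F) ∩ eps⁻¹(p)| - |(F \ F') ∩ eps⁻¹(p)|`. -/
noncomputable def chiFn {P E : Type*} (eps : E → P) (F F' : Set E) : P → ℤ :=
  fun p => (((F' \ F) ∩ eps ⁻¹' {p}).ncard : ℤ) - (((F \ F') ∩ eps ⁻¹' {p}).ncard : ℤ)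

open Classical in
/-- The operator `S_p` on ideals: remove the (unique) element of label `p`
that can be removed, else add the (unique) element of label `p` that can be
added, else do nothing. -/
noncomputable def Sact {P E : Type*} [PartialOrder E] (eps : E → P) (p : P) (I : Set E) :
    Set E :=
  if h : ∃ a, a ∈ I ∧ eps a = p ∧ IsIdeal (I \ {a}) then I \ {h.choose}
  else if h' : ∃ a, a ∉ I ∧ eps a = p ∧ IsIdeal (I ∪ {a}) then I ∪ {h'.choose}
  else I

/-- The defining relations of the Weyl group of a (doubly laced)
generalized Cartan matrix. -/
def weylRels {P : Type*} (A : P → P → ℤ) : Set (FreeGroup P) :=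
  {r | (∃ p, r = FreeGroup.of p ^ 2) ∨
       (∃ p q, A p q = 0 ∧ r = (FreeGroup.of p * FreeGroup.of q) ^ 2) ∨
       (∃ p q, A p q * A q p = 1 ∧ r = (FreeGroup.of p * FreeGroup.of q) ^ 3) ∨
       (∃ p q, A p q * A q p = 2 ∧ r = (FreeGroup.of p * FreeGroup.of q) ^ 4)}

/-- The Weyl group of a generalized Cartan matrix, as a presented group. -/
abbrev WeylGroup {P : Type*} (A : P → P → ℤ) := PresentedGroup (weylRels A)

/-- The reflection `s_p` in the reflection representation on `ℤ^P`:
`s_p(v) = v - (∑ q, a_{pq} v_q) e_p`. -/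
def reflAct {P : Type*} [Fintype P] [DecidableEq P] (A : P → P → ℤ) (p : P) (v : P → ℤ) :
    P → ℤ :=
  fun r => if r = p then v p - ∑ q, A p q * v q else v r

/-- `A` is of affine type: indecomposable, and `A δ = 0` for some positive
integer vector `δ`. -/
def IsAffine {P : Type*} [Fintype P] (A : P → P → ℤ) : Prop :=
  (∀ p q : P, Relation.ReflTransGen (Adj A) p q) ∧
  ∃ δ : P → ℤ, (∀ p, 0 < δ p) ∧ ∀ p, (∑ q, A p q * δ q) = 0


/-!
Fix a proper ideal `J` and a label `p`. The last element `a` of `J` over `p` and the first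
element `b` outside `J` over `p` are consecutive in their fibre, so by the interval axiom the
elements strictly between them carry total weight `∑ -a_{p, eps c} = 2`. The part of this weight
carried by elements of `J`, the charge, is `0`, `1` or `2`, according as `a` can be removed,
nothing can be done, or `b` can be added; so `S_p` is an involution shifting `chiFn I J` by
`(charge - 1) e_p`. Adding one element `x` to `J` lowers the charge by `a_{p, eps x}`, and any two
proper ideals differ by finitely many such steps; hence `charge + ∑_t a_{pt} chiFn I J t` is
constant, and `S_p` acts on characters as the affine reflection `v ↦ s_p v + κ e_p`. Since
`J ↦ chiFn I J` is injective, each Weyl relation reduces to an identity between two affine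
reflections of a plane. The same one-element steps give transitivity.
-/

section Ideal

variable {E : Type*} [PartialOrder E] {J : Set E} {x : E}

lemma not_lt_of_isIdeal_diff_singleton (h : IsIdeal (J \ {x})) : ∀ z ∈ J, ¬ x < z :=
  fun _ hz hxz => (h ⟨hz, hxz.ne'⟩ hxz.le).2 rfl

lemma isIdeal_diff_singleton_iff (hJ : IsIdeal J) :
    IsIdeal (J \ {x}) ↔ ∀ z ∈ J, ¬ x < z := by
  refine ⟨not_lt_of_isIdeal_diff_singleton, fun h z hz y hyz => ⟨hJ hz.1 hyz, ?_⟩⟩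
  rintro rfl
  exact h z hz.1 (hyz.lt_of_ne fun e => hz.2 e.symm)

lemma mem_of_lt_of_isIdeal_union_singleton (h : IsIdeal (J ∪ {x})) {y : E} (hy : y < x) :
    y ∈ J :=
  (h (Or.inr rfl) hy.le).resolve_right hy.ne

lemma isIdeal_union_singleton_iff (hJ : IsIdeal J) :
    IsIdeal (J ∪ {x}) ↔ ∀ y < x, y ∈ J := by
  refine ⟨fun h y => mem_of_lt_of_isIdeal_union_singleton h, fun h z hz y hyz => ?_⟩
  rcases hz with hz | rfl
  · exact Or.inl (hJ hz hyz)
  · rcases hyz.lt_or_eq with hlt | rfl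
    · exact Or.inl (h y hlt)
    · exact Or.inr rfl

lemma IsIdeal.lt_of_comparable (hJ : IsIdeal J) {y : E} (hx : x ∈ J) (hy : y ∉ J)
    (h : x ≤ y ∨ y ≤ x) : x < y :=
  (h.resolve_right fun h => hy (hJ hx h)).lt_of_ne fun e => hy (e ▸ hx)

end Ideal

section ReflTransGen

variable {E : Type*} [PartialOrder E] {R : E → E → Prop} {a b : E}

lemma le_of_reflTransGen (hR : ∀ x y, R x y → x ≤ y) (h : Relation.ReflTransGen R a b) :
    a ≤ b := by
  induction h with
  | refl => exact le_rfl
  | tail _ hcb ih => exact ih.trans (hR _ _ hcb)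

lemma exists_lt_le_of_reflTransGen (hR : ∀ x y, R x y → x ≤ y)
    (h : Relation.ReflTransGen R a b) (hab : a < b) : ∃ c, a < c ∧ c ≤ b ∧ R a c := by
  induction h using Relation.ReflTransGen.head_induction_on with
  | refl => exact absurd hab (lt_irrefl _)
  | @head a c hac hcb ih =>
    rcases (hR _ _ hac).lt_or_eq with hlt | rfl
    · exact ⟨c, hlt, le_of_reflTransGen hR hcb, hac⟩
    · exact ih hab

lemma exists_le_lt_of_reflTransGen (hR : ∀ x y, R x y → x ≤ y)
    (h : Relation.ReflTransGen R a b) (hab : a < b) : ∃ c, a ≤ c ∧ c < b ∧ R c b := by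
  induction h with
  | refl => exact absurd hab (lt_irrefl _)
  | @tail c b hac hcb ih =>
    rcases (hR _ _ hcb).lt_or_eq with hlt | rfl
    · exact ⟨c, le_of_reflTransGen hR hac, hlt, hcb⟩
    · exact ih hab

end ReflTransGen

lemma exists_isGreatest_of_isChain {E : Type*} [PartialOrder E] [LocallyFiniteOrder E]
    {s : Set E} (hc : IsChain (· ≤ ·) s) (hne : s.Nonempty) (hbdd : BddAbove s) :
    ∃ a, IsGreatest s a := by
  obtain ⟨x₀, hx₀⟩ := hne
  obtain ⟨k, hk⟩ := hbdd
  have hfin : (s ∩ Set.Ici x₀).Finite :=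
    (Set.finite_Icc x₀ k).subset fun x hx => ⟨hx.2, hk hx.1⟩
  obtain ⟨m, hm⟩ := hfin.exists_maximal ⟨x₀, hx₀, le_rfl⟩
  refine ⟨m, hm.prop.1, fun y hy => ?_⟩
  rcases hc.total hy hm.prop.1 with h | h
  · exact h
  · exact hm.le_of_ge ⟨hy, hm.prop.2.trans h⟩ h

lemma exists_isLeast_of_isChain {E : Type*} [PartialOrder E] [LocallyFiniteOrder E]
    {s : Set E} (hc : IsChain (· ≤ ·) s) (hne : s.Nonempty) (hbdd : BddBelow s) :
    ∃ a, IsLeast s a :=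
  exists_isGreatest_of_isChain (E := Eᵒᵈ) hc.symm hne hbdd

abbrev IsRemovable {P E : Type*} [PartialOrder E] (eps : E → P) (J : Set E) (p : P) (x : E) :
    Prop :=
  x ∈ J ∧ eps x = p ∧ IsIdeal (J \ {x})

abbrev IsAddable {P E : Type*} [PartialOrder E] (eps : E → P) (J : Set E) (p : P) (x : E) :
    Prop :=
  x ∉ J ∧ eps x = p ∧ IsIdeal (J ∪ {x})

structure IsFibreGap {P E : Type*} [PartialOrder E] (eps : E → P) (J : Set E) (p : P) (a b : E) :
    Prop where
  top_mem : a ∈ J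
  eps_top : eps a = p
  le_top : ∀ x ∈ J, eps x = p → x ≤ a
  bot_not_mem : b ∉ J
  eps_bot : eps b = p
  bot_le : ∀ x ∉ J, eps x = p → b ≤ x

namespace IsFullHeap

variable {P E : Type*} [PartialOrder E] [LocallyFiniteOrder E] {A : P → P → ℤ} {eps : E → P}
  {J : Set E} {p : P} {a b x y : E}

lemma le_total_of_eps_eq (hE : IsFullHeap A eps) (h : eps x = eps y) : x ≤ y ∨ y ≤ x :=
  hE.comparable x y (Or.inl h)

lemma isChain_fibre (hE : IsFullHeap A eps) (p : P) : IsChain (· ≤ ·) (eps ⁻¹' {p}) :=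
  fun _ hx _ hy _ => hE.le_total_of_eps_eq (hx.trans hy.symm)

lemma exists_lt_le_of_lt (hE : IsFullHeap A eps) (hab : a < b) :
    ∃ c, a < c ∧ c ≤ b ∧ (eps a = eps c ∨ Adj A (eps a) (eps c)) := by
  obtain ⟨c, hac, hcb, -, hc⟩ :=
    exists_lt_le_of_reflTransGen (fun _ _ h => h.1) ((hE.le_generated a b).1 hab.le) hab
  exact ⟨c, hac, hcb, hc⟩

lemma exists_le_lt_of_lt (hE : IsFullHeap A eps) (hab : a < b) :
    ∃ c, a ≤ c ∧ c < b ∧ (eps c = eps b ∨ Adj A (eps c) (eps b)) := by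
  obtain ⟨c, hac, hcb, -, hc⟩ :=
    exists_le_lt_of_reflTransGen (fun _ _ h => h.1) ((hE.le_generated a b).1 hab.le) hab
  exact ⟨c, hac, hcb, hc⟩

lemma isRemovable_unique (hE : IsFullHeap A eps) (hx : IsRemovable eps J p x)
    (hy : IsRemovable eps J p y) : x = y := by
  have not_lt {x y} (hx : IsRemovable eps J p x) (hy : IsRemovable eps J p y) : ¬ x < y :=
    not_lt_of_isIdeal_diff_singleton hx.2.2 y hy.1
  rcases hE.le_total_of_eps_eq (hx.2.1.trans hy.2.1.symm) with h | h
  · exact h.eq_of_not_lt (not_lt hx hy)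
  · exact (h.eq_of_not_lt (not_lt hy hx)).symm

lemma isAddable_unique (hE : IsFullHeap A eps) (hx : IsAddable eps J p x)
    (hy : IsAddable eps J p y) : x = y := by
  have not_lt {x y} (hx : IsAddable eps J p x) (hy : IsAddable eps J p y) : ¬ x < y :=
    fun h => hx.1 (mem_of_lt_of_isIdeal_union_singleton hy.2.2 h)
  rcases hE.le_total_of_eps_eq (hx.2.1.trans hy.2.1.symm) with h | h
  · exact h.eq_of_not_lt (not_lt hx hy)
  · exact (h.eq_of_not_lt (not_lt hy hx)).symm

lemma exists_isFibreGap (hE : IsFullHeap A eps) (hJ : IsProperIdeal eps J) (p : P) :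
    ∃ a b, IsFibreGap eps J p a b := by
  obtain ⟨⟨x, hxp, hxJ⟩, ⟨y, hyp, hyJ⟩⟩ := hJ.2 p
  have hxy : ∀ z ∈ J, eps z = p → ∀ w ∉ J, eps w = p → z ≤ w :=
    fun z hz hzp w hw hwp =>
      (hE.le_total_of_eps_eq (hzp.trans hwp.symm)).resolve_right fun h => hw (hJ.1 hz h)
  have hchain {s : Set E} : IsChain (· ≤ ·) (s ∩ eps ⁻¹' {p}) :=
    (hE.isChain_fibre p).mono Set.inter_subset_right
  obtain ⟨a, ha⟩ := exists_isGreatest_of_isChain hchain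
    ⟨x, hxJ, hxp⟩ ⟨y, fun z hz => hxy z hz.1 hz.2 y hyJ hyp⟩
  obtain ⟨b, hb⟩ := exists_isLeast_of_isChain hchain
    ⟨y, hyJ, hyp⟩ ⟨x, fun w hw => hxy x hxJ hxp w hw.1 hw.2⟩
  exact ⟨a, b, ⟨ha.1.1, ha.1.2, fun z hz hzp => ha.2 ⟨hz, hzp⟩, hb.1.1, hb.1.2,
    fun w hw hwp => hb.2 ⟨hw, hwp⟩⟩⟩

end IsFullHeap

namespace IsFibreGap

variable {P E : Type*} [PartialOrder E] {A : P → P → ℤ} {eps : E → P}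
  {J : Set E} {p : P} {a b : E}

lemma eps_ne [LocallyFiniteOrder E] (hg : IsFibreGap eps J p a b) {c : E}
    (hc : c ∈ Finset.Ioo a b) : eps c ≠ p := by
  rw [Finset.mem_Ioo] at hc
  intro hcp
  by_cases hcJ : c ∈ J
  · exact (hg.le_top c hcJ hcp).not_gt hc.1
  · exact (hg.bot_le c hcJ hcp).not_gt hc.2

lemma neg_entry_nonneg [LocallyFiniteOrder E] (hA : IsGCM A) (hg : IsFibreGap eps J p a b)
    {c : E} (hc : c ∈ Finset.Ioo a b) : 0 ≤ -A p (eps c) :=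
  neg_nonneg.2 (hA.2.1 p (eps c) (hg.eps_ne hc).symm)

lemma lt [LocallyFiniteOrder E] (hE : IsFullHeap A eps) (hJ : IsIdeal J)
    (hg : IsFibreGap eps J p a b) : a < b :=
  hJ.lt_of_comparable hg.top_mem hg.bot_not_mem
    (hE.le_total_of_eps_eq (hg.eps_top.trans hg.eps_bot.symm))

lemma sum_Ioo [LocallyFiniteOrder E] (hE : IsFullHeap A eps) (hJ : IsIdeal J)
    (hg : IsFibreGap eps J p a b) : ∑ c ∈ Finset.Ioo a b, A p (eps c) = -2 := by
  have h := hE.interval a b (hg.lt hE hJ) (hg.eps_top.trans hg.eps_bot.symm) fun c hac hcb =>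
    hg.eps_top ▸ hg.eps_ne (Finset.mem_Ioo.2 ⟨hac, hcb⟩)
  rwa [hg.eps_top] at h

lemma union_singleton (hg : IsFibreGap eps J p a b) {x : E} (hxp : eps x ≠ p) :
    IsFibreGap eps (J ∪ {x}) p a b where
  top_mem := Or.inl hg.top_mem
  eps_top := hg.eps_top
  le_top z hz hzp := hz.elim (hg.le_top z · hzp) fun h => absurd (h ▸ hzp) hxp
  bot_not_mem h := h.elim hg.bot_not_mem fun h => hxp (h ▸ hg.eps_bot)
  eps_bot := hg.eps_bot
  bot_le z hz hzp := hg.bot_le z (fun h => hz (Or.inl h)) hzp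

lemma mem_Ioo_of_isAddable [LocallyFiniteOrder E] (hE : IsFullHeap A eps) (hJ : IsIdeal J)
    (hg : IsFibreGap eps J p a b) {x : E} (hx : IsAddable eps J (eps x) x) (hxp : eps x ≠ p)
    (hne : A p (eps x) ≠ 0) : x ∈ Finset.Ioo a b := by
  have hadj : Adj A p (eps x) := ⟨Ne.symm hxp, hne⟩
  have hbx : b ≠ x := fun h => hxp (h ▸ hg.eps_bot)
  refine Finset.mem_Ioo.2 ⟨?_, ?_⟩
  · exact hJ.lt_of_comparable hg.top_mem hx.1 (hE.comparable a x (Or.inr (hg.eps_top ▸ hadj)))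
  · refine ((hE.comparable b x (Or.inr (hg.eps_bot ▸ hadj))).resolve_left fun h => ?_).lt_of_ne
      hbx.symm
    exact hg.bot_not_mem (mem_of_lt_of_isIdeal_union_singleton hx.2.2 (h.lt_of_ne hbx))

end IsFibreGap

open Classical in
noncomputable def charge {P E : Type*} [PartialOrder E] [LocallyFiniteOrder E]
    (A : P → P → ℤ) (eps : E → P) (p : P) (J : Set E) : ℤ :=
  if h : ∃ g : E × E, IsFibreGap eps J p g.1 g.2 then
    ∑ c ∈ Finset.Ioo h.choose.1 h.choose.2 with c ∈ J, -A p (eps c)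
  else 0

namespace IsFibreGap

variable {P E : Type*} [PartialOrder E] [LocallyFiniteOrder E] {A : P → P → ℤ} {eps : E → P}
  {J : Set E} {p : P} {a b : E}

open Classical in
lemma charge_eq (hg : IsFibreGap eps J p a b) :
    charge A eps p J = ∑ c ∈ Finset.Ioo a b with c ∈ J, -A p (eps c) := by
  have h : ∃ g : E × E, IsFibreGap eps J p g.1 g.2 := ⟨(a, b), hg⟩
  have hg' := h.choose_spec
  have hchoose : h.choose = (a, b) := Prod.ext
    (le_antisymm (hg.le_top _ hg'.top_mem hg'.eps_top) (hg'.le_top _ hg.top_mem hg.eps_top))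
    (le_antisymm (hg'.bot_le _ hg.bot_not_mem hg.eps_bot)
      (hg.bot_le _ hg'.bot_not_mem hg'.eps_bot))
  rw [charge, dif_pos h, hchoose]

lemma charge_nonneg (hA : IsGCM A) (hg : IsFibreGap eps J p a b) :
    0 ≤ charge A eps p J := by
  classical
  rw [hg.charge_eq]
  exact Finset.sum_nonneg fun c hc => hg.neg_entry_nonneg hA (Finset.mem_filter.1 hc).1

open Classical in
lemma charge_add_sum_not_mem (hE : IsFullHeap A eps) (hJ : IsIdeal J)
    (hg : IsFibreGap eps J p a b) :
    charge A eps p J + ∑ c ∈ Finset.Ioo a b with c ∉ J, -A p (eps c) = 2 := by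
  rw [hg.charge_eq, Finset.sum_filter_add_sum_filter_not, Finset.sum_neg_distrib,
    hg.sum_Ioo hE hJ, neg_neg]

lemma charge_le_two (hA : IsGCM A) (hE : IsFullHeap A eps) (hJ : IsIdeal J)
    (hg : IsFibreGap eps J p a b) : charge A eps p J ≤ 2 := by
  classical
  have h := hg.charge_add_sum_not_mem hE hJ
  have : 0 ≤ ∑ c ∈ Finset.Ioo a b with c ∉ J, -A p (eps c) :=
    Finset.sum_nonneg fun c hc => hg.neg_entry_nonneg hA (Finset.mem_filter.1 hc).1
  omega

lemma charge_eq_zero_iff (hA : IsGCM A) (hE : IsFullHeap A eps) (hJ : IsIdeal J)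
    (hg : IsFibreGap eps J p a b) : charge A eps p J = 0 ↔ ∀ z ∈ J, ¬ a < z := by
  classical
  rw [hg.charge_eq, Finset.sum_eq_zero_iff_of_nonneg fun c hc =>
    hg.neg_entry_nonneg hA (Finset.mem_filter.1 hc).1]
  constructor
  · intro h0 z hz haz
    obtain ⟨c, hac, hcz, hc⟩ := hE.exists_lt_le_of_lt haz
    have hcJ : c ∈ J := hJ hz hcz
    rw [hg.eps_top] at hc
    rcases hc with hc | hc
    · exact (hg.le_top c hcJ hc.symm).not_gt hac
    · have hcb : c < b :=
        hJ.lt_of_comparable hcJ hg.bot_not_mem (hE.comparable b c (Or.inr (hg.eps_bot ▸ hc))).symm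
      have hcI : c ∈ Finset.Ioo a b := Finset.mem_Ioo.2 ⟨hac, hcb⟩
      exact hc.2 (neg_eq_zero.1 (h0 c (Finset.mem_filter.2 ⟨hcI, hcJ⟩)))
  · intro h c hc
    rw [Finset.mem_filter, Finset.mem_Ioo] at hc
    exact absurd hc.1.1 (h c hc.2)

lemma charge_eq_two_iff (hA : IsGCM A) (hE : IsFullHeap A eps) (hJ : IsIdeal J)
    (hg : IsFibreGap eps J p a b) : charge A eps p J = 2 ↔ ∀ y < b, y ∈ J := by
  classical
  have hsplit := hg.charge_add_sum_not_mem hE hJ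
  have hiff : charge A eps p J = 2 ↔ ∑ c ∈ Finset.Ioo a b with c ∉ J, -A p (eps c) = 0 := by
    omega
  rw [hiff, Finset.sum_eq_zero_iff_of_nonneg fun c hc =>
    hg.neg_entry_nonneg hA (Finset.mem_filter.1 hc).1]
  constructor
  · intro h0 y hyb
    by_contra hyJ
    obtain ⟨c, hyc, hcb, hc⟩ := hE.exists_le_lt_of_lt hyb
    have hcJ : c ∉ J := fun h => hyJ (hJ h hyc)
    rw [hg.eps_bot] at hc
    rcases hc with hc | hc
    · exact (hg.bot_le c hcJ hc).not_gt hcb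
    · have hac : a < c :=
        hJ.lt_of_comparable hg.top_mem hcJ (hE.comparable c a (Or.inr (hg.eps_top ▸ hc))).symm
      have hcI : c ∈ Finset.Ioo a b := Finset.mem_Ioo.2 ⟨hac, hcb⟩
      exact hc.2 ((hA.2.2.1 _ _).1 (neg_eq_zero.1 (h0 c (Finset.mem_filter.2 ⟨hcI, hcJ⟩))))
  · intro h c hc
    rw [Finset.mem_filter, Finset.mem_Ioo] at hc
    exact absurd (h c hc.1.2) hc.2

end IsFibreGap

section Sact

variable {P E : Type*} [PartialOrder E] {eps : E → P} {J : Set E} {p : P} {x : E}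

lemma IsRemovable.isAddable_diff (hJ : IsIdeal J) (hx : IsRemovable eps J p x) :
    IsAddable eps (J \ {x}) p x :=
  ⟨fun h => h.2 rfl, hx.2.1, by simpa [hx.1] using hJ⟩

lemma IsAddable.isRemovable_union (hJ : IsIdeal J) (hx : IsAddable eps J p x) :
    IsRemovable eps (J ∪ {x}) p x :=
  ⟨Or.inr rfl, hx.2.1, by simpa [hx.1] using hJ⟩

lemma Sact_of_not_exists (h₁ : ¬ ∃ x, IsRemovable eps J p x)
    (h₂ : ¬ ∃ x, IsAddable eps J p x) : Sact eps p J = J := by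
  rw [Sact, dif_neg h₁, dif_neg h₂]

end Sact

namespace IsFullHeap

variable {P E : Type*} [PartialOrder E] [LocallyFiniteOrder E] {A : P → P → ℤ} {eps : E → P}
  {J : Set E} {p : P} {x y : E}

lemma lt_of_eps_eq_of_not_le (hE : IsFullHeap A eps) (h : eps x = eps y) (hyx : ¬ y ≤ x) :
    x < y :=
  lt_of_le_not_ge ((hE.le_total_of_eps_eq h).resolve_right hyx) hyx

lemma isProperIdeal_diff_singleton (hE : IsFullHeap A eps) (hJ : IsProperIdeal eps J)
    (hx : IsRemovable eps J p x) : IsProperIdeal eps (J \ {x}) := by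
  refine ⟨hx.2.2, fun r => ⟨?_, ?_⟩⟩
  · obtain ⟨z, hzr, hzJ⟩ := (hJ.2 r).1
    obtain ⟨y, hyr, hzy⟩ := hE.unbounded_below r z
    have hyz : y < z := hE.lt_of_eps_eq_of_not_le (hyr.trans hzr.symm) hzy
    exact ⟨y, hyr, hJ.1 hzJ hyz.le, fun h : y = x =>
      not_lt_of_isIdeal_diff_singleton hx.2.2 z hzJ (h ▸ hyz)⟩
  · obtain ⟨z, hzr, hzJ⟩ := (hJ.2 r).2
    exact ⟨z, hzr, fun h => hzJ h.1⟩

lemma isProperIdeal_union_singleton (hE : IsFullHeap A eps) (hJ : IsProperIdeal eps J)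
    (hx : IsAddable eps J p x) : IsProperIdeal eps (J ∪ {x}) := by
  refine ⟨hx.2.2, fun r => ⟨?_, ?_⟩⟩
  · obtain ⟨z, hzr, hzJ⟩ := (hJ.2 r).1
    exact ⟨z, hzr, Or.inl hzJ⟩
  · obtain ⟨z, hzr, hzJ⟩ := (hJ.2 r).2
    obtain ⟨y, hyr, hyz⟩ := hE.unbounded_above r z
    have hzy : z < y := hE.lt_of_eps_eq_of_not_le (hzr.trans hyr.symm) hyz
    refine ⟨y, hyr, ?_⟩
    rintro (hyJ | rfl)
    · exact hzJ (hJ.1 hyJ hzy.le)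
    · exact hzJ (mem_of_lt_of_isIdeal_union_singleton hx.2.2 hzy)

lemma isProperIdeal_Sact (hE : IsFullHeap A eps) (hJ : IsProperIdeal eps J) (p : P) :
    IsProperIdeal eps (Sact eps p J) := by
  unfold Sact
  split_ifs with h₁ h₂
  · exact hE.isProperIdeal_diff_singleton hJ h₁.choose_spec
  · exact hE.isProperIdeal_union_singleton hJ h₂.choose_spec
  · exact hJ

lemma charge_nonneg (hA : IsGCM A) (hE : IsFullHeap A eps) (hJ : IsProperIdeal eps J) (p : P) :
    0 ≤ charge A eps p J :=
  let ⟨_, _, hg⟩ := hE.exists_isFibreGap hJ p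
  hg.charge_nonneg hA

lemma charge_le_two (hA : IsGCM A) (hE : IsFullHeap A eps) (hJ : IsProperIdeal eps J) (p : P) :
    charge A eps p J ≤ 2 :=
  let ⟨_, _, hg⟩ := hE.exists_isFibreGap hJ p
  hg.charge_le_two hA hE hJ.1

lemma charge_eq_zero_iff (hA : IsGCM A) (hE : IsFullHeap A eps) (hJ : IsProperIdeal eps J) :
    charge A eps p J = 0 ↔ ∃ x, IsRemovable eps J p x := by
  obtain ⟨a, b, hg⟩ := hE.exists_isFibreGap hJ p
  rw [hg.charge_eq_zero_iff hA hE hJ.1]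
  constructor
  · exact fun h => ⟨a, hg.top_mem, hg.eps_top, (isIdeal_diff_singleton_iff hJ.1).2 h⟩
  · rintro ⟨x, hxJ, hxp, hx⟩
    obtain rfl : x = a := (hg.le_top x hxJ hxp).eq_of_not_lt
      (not_lt_of_isIdeal_diff_singleton hx a hg.top_mem)
    exact not_lt_of_isIdeal_diff_singleton hx

lemma charge_eq_two_iff (hA : IsGCM A) (hE : IsFullHeap A eps) (hJ : IsProperIdeal eps J) :
    charge A eps p J = 2 ↔ ∃ x, IsAddable eps J p x := by
  obtain ⟨a, b, hg⟩ := hE.exists_isFibreGap hJ p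
  rw [hg.charge_eq_two_iff hA hE hJ.1]
  constructor
  · exact fun h => ⟨b, hg.bot_not_mem, hg.eps_bot, (isIdeal_union_singleton_iff hJ.1).2 h⟩
  · rintro ⟨x, hxJ, hxp, hx⟩
    obtain rfl : b = x := (hg.bot_le x hxJ hxp).eq_of_not_lt
      fun h => hg.bot_not_mem (mem_of_lt_of_isIdeal_union_singleton hx h)
    exact fun y => mem_of_lt_of_isIdeal_union_singleton hx

lemma Sact_of_isRemovable (hE : IsFullHeap A eps) (hx : IsRemovable eps J p x) :
    Sact eps p J = J \ {x} := by
  have h : ∃ a, IsRemovable eps J p a := ⟨x, hx⟩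
  rw [Sact, dif_pos h, hE.isRemovable_unique h.choose_spec hx]

lemma Sact_of_isAddable (hA : IsGCM A) (hE : IsFullHeap A eps) (hJ : IsProperIdeal eps J)
    (hx : IsAddable eps J p x) : Sact eps p J = J ∪ {x} := by
  have h2 : charge A eps p J = 2 := (hE.charge_eq_two_iff hA hJ).2 ⟨x, hx⟩
  have hrem : ¬ ∃ a, IsRemovable eps J p a := by
    rw [← hE.charge_eq_zero_iff hA hJ]
    omega
  have h : ∃ a, IsAddable eps J p a := ⟨x, hx⟩
  rw [Sact, dif_neg hrem, dif_pos h, hE.isAddable_unique h.choose_spec hx]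

lemma Sact_Sact (hA : IsGCM A) (hE : IsFullHeap A eps) (hJ : IsProperIdeal eps J) (p : P) :
    Sact eps p (Sact eps p J) = J := by
  by_cases h₁ : ∃ x, IsRemovable eps J p x
  · obtain ⟨x, hx⟩ := h₁
    rw [hE.Sact_of_isRemovable hx, hE.Sact_of_isAddable hA (hE.isProperIdeal_diff_singleton hJ hx)
      (hx.isAddable_diff hJ.1)]
    simp [hx.1]
  by_cases h₂ : ∃ x, IsAddable eps J p x
  · obtain ⟨x, hx⟩ := h₂
    rw [hE.Sact_of_isAddable hA hJ hx, hE.Sact_of_isRemovable (hx.isRemovable_union hJ.1)]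
    simp [hx.1]
  rw [Sact_of_not_exists h₁ h₂, Sact_of_not_exists h₁ h₂]

end IsFullHeap

section chiFn

variable {P E : Type*} {eps : E → P}

lemma chiFn_swap (F G : Set E) : chiFn eps F G = -chiFn eps G F := by
  funext s
  simp [chiFn]

lemma chiFn_self (F : Set E) : chiFn eps F F = 0 := by
  funext s
  simp [chiFn]

end chiFn

namespace IsFullHeap

variable {P E : Type*} [PartialOrder E] [LocallyFiniteOrder E] {A : P → P → ℤ} {eps : E → P}
  {F I J K : Set E} {x : E}

lemma finite_diff_inter_fibre (hE : IsFullHeap A eps) (hI : IsProperIdeal eps I)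
    (hJ : IsProperIdeal eps J) (r : P) : ((I \ J) ∩ eps ⁻¹' {r}).Finite := by
  obtain ⟨y, hyr, hyJ⟩ := (hJ.2 r).1
  obtain ⟨k, hkr, hkI⟩ := (hI.2 r).2
  refine (Set.finite_Icc y k).subset ?_
  rintro x ⟨⟨hxI, hxJ⟩, hxr : eps x = r⟩
  exact ⟨(hE.le_total_of_eps_eq (hyr.trans hxr.symm)).resolve_right fun h => hxJ (hJ.1 hyJ h),
    (hE.le_total_of_eps_eq (hxr.trans hkr.symm)).resolve_right fun h => hkI (hI.1 hxI h)⟩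

lemma finite_diff [Finite P] (hE : IsFullHeap A eps) (hI : IsProperIdeal eps I)
    (hJ : IsProperIdeal eps J) : (I \ J).Finite := by
  have h : I \ J = ⋃ r, (I \ J) ∩ eps ⁻¹' {r} := by
    ext x
    simp
  rw [h]
  exact Set.finite_iUnion (hE.finite_diff_inter_fibre hI hJ)

lemma chiFn_neg_of_mem_diff (hE : IsFullHeap A eps) (hI : IsProperIdeal eps I)
    (hJ : IsProperIdeal eps J) (hxI : x ∈ I) (hxJ : x ∉ J) : chiFn eps I J (eps x) < 0 := by
  have hJI : (J \ I) ∩ eps ⁻¹' {eps x} = ∅ := by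
    refine Set.eq_empty_of_forall_notMem fun y ⟨⟨hyJ, hyI⟩, hyx⟩ => ?_
    rcases hE.le_total_of_eps_eq hyx with h | h
    · exact hyI (hI.1 hxI h)
    · exact hxJ (hJ.1 hyJ h)
  have hIJ : 0 < ((I \ J) ∩ eps ⁻¹' {eps x}).ncard :=
    (Set.ncard_pos (hE.finite_diff_inter_fibre hI hJ _)).2 ⟨x, ⟨hxI, hxJ⟩, rfl⟩
  rw [chiFn, hJI, Set.ncard_empty]
  omega

lemma eq_of_chiFn_eq_zero (hE : IsFullHeap A eps) (hI : IsProperIdeal eps I)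
    (hJ : IsProperIdeal eps J) (h : chiFn eps I J = 0) : I = J := by
  ext x
  constructor
  · intro hxI
    by_contra hxJ
    simpa [h] using hE.chiFn_neg_of_mem_diff hI hJ hxI hxJ
  · intro hxJ
    by_contra hxI
    simpa [chiFn_swap J I, h] using hE.chiFn_neg_of_mem_diff hJ hI hxJ hxI

lemma chiFn_union_singleton [DecidableEq P] (hE : IsFullHeap A eps) (hF : IsProperIdeal eps F)
    (hJ : IsProperIdeal eps J) (hx : x ∉ J) :
    chiFn eps F (J ∪ {x}) = chiFn eps F J + Pi.single (eps x) 1 := by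
  funext s
  simp only [chiFn, Pi.add_apply, Pi.single_apply]
  split_ifs with hs
  · subst hs
    by_cases hxF : x ∈ F
    · have h₁ : ((J ∪ {x}) \ F) ∩ eps ⁻¹' {eps x} = (J \ F) ∩ eps ⁻¹' {eps x} := by
        ext y; by_cases hy : y = x <;> simp [hy, hxF]
      have h₂ :
          (F \ (J ∪ {x})) ∩ eps ⁻¹' {eps x} = ((F \ J) ∩ eps ⁻¹' {eps x}) \ {x} := by
        ext y; by_cases hy : y = x <;> simp [hy, hxF]
      rw [h₁, h₂, ← Set.ncard_sdiff_singleton_add_one (s := (F \ J) ∩ eps ⁻¹' {eps x})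
        ⟨⟨hxF, hx⟩, rfl⟩ (hE.finite_diff_inter_fibre hF hJ _)]
      push_cast
      ring
    · have h₁ :
          ((J ∪ {x}) \ F) ∩ eps ⁻¹' {eps x} = insert x ((J \ F) ∩ eps ⁻¹' {eps x}) := by
        ext y; by_cases hy : y = x <;> simp [hy, hxF]
      have h₂ : (F \ (J ∪ {x})) ∩ eps ⁻¹' {eps x} = (F \ J) ∩ eps ⁻¹' {eps x} := by
        ext y; by_cases hy : y = x <;> simp [hy, hxF]
      rw [h₁, h₂, Set.ncard_insert_of_notMem (fun h => hx h.1.1)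
        (hE.finite_diff_inter_fibre hJ hF _)]
      push_cast
      ring
  · have h₁ : ((J ∪ {x}) \ F) ∩ eps ⁻¹' {s} = (J \ F) ∩ eps ⁻¹' {s} := by
      ext y; by_cases hy : y = x <;> simp [hy, Ne.symm hs]
    have h₂ : (F \ (J ∪ {x})) ∩ eps ⁻¹' {s} = (F \ J) ∩ eps ⁻¹' {s} := by
      ext y; by_cases hy : y = x <;> simp [hy, Ne.symm hs]
    rw [h₁, h₂, add_zero]

theorem properIdeal_induction [Finite P] (hE : IsFullHeap A eps) (hK : IsProperIdeal eps K)
    {motive : Set E → Prop} (base : motive K)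
    (step : ∀ J x, IsProperIdeal eps J → IsAddable eps J (eps x) x →
      (motive J ↔ motive (J ∪ {x})))
    (hJ : IsProperIdeal eps J) : motive J := by
  induction hn : (symmDiff J K).ncard using Nat.strong_induction_on generalizing J with
  | _ n ih =>
  have hfin : (symmDiff J K).Finite := (hE.finite_diff hJ hK).union (hE.finite_diff hK hJ)
  by_cases hJK : (J \ K).Nonempty
  · obtain ⟨x, hx⟩ := (hE.finite_diff hJ hK).exists_maximal hJK
    have hrem : IsRemovable eps J (eps x) x := by
      refine ⟨hx.prop.1, rfl, (isIdeal_diff_singleton_iff hJ.1).2 fun z hz hxz => ?_⟩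
      exact hxz.not_ge (hx.le_of_ge ⟨hz, fun hzK => hx.prop.2 (hK.1 hzK hxz.le)⟩ hxz.le)
    have hJ' := hE.isProperIdeal_diff_singleton hJ hrem
    have hsymm : symmDiff (J \ {x}) K = symmDiff J K \ {x} := by
      ext y; by_cases hy : y = x <;> simp [Set.mem_symmDiff, hy, hx.prop.1, hx.prop.2]
    have hlt : (symmDiff (J \ {x}) K).ncard < n := hn ▸ hsymm ▸
      Set.ncard_sdiff_singleton_lt_of_mem (Or.inl hx.prop) hfin
    have := ih _ hlt hJ' rfl
    rw [step _ x hJ' (hrem.isAddable_diff hJ.1)] at this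
    simpa [hx.prop.1] using this
  obtain rfl | hKJ := (Set.sdiff_eq_empty.1 (Set.not_nonempty_iff_eq_empty.1 hJK)).eq_or_ssubset
  · exact base
  obtain ⟨x, hx⟩ := (hE.finite_diff hK hJ).exists_minimal (Set.nonempty_of_ssubset hKJ)
  have hadd : IsAddable eps J (eps x) x := by
    refine ⟨hx.prop.2, rfl, (isIdeal_union_singleton_iff hJ.1).2 fun y hyx => ?_⟩
    by_contra hyJ
    exact hyx.not_ge (hx.le_of_le ⟨hK.1 hx.prop.1 hyx.le, hyJ⟩ hyx.le)
  have hJ' := hE.isProperIdeal_union_singleton hJ hadd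
  have hsymm : symmDiff (J ∪ {x}) K = symmDiff J K \ {x} := by
    ext y; by_cases hy : y = x <;> simp [Set.mem_symmDiff, hy, hx.prop.1, hx.prop.2]
  have hlt : (symmDiff (J ∪ {x}) K).ncard < n := hn ▸ hsymm ▸
    Set.ncard_sdiff_singleton_lt_of_mem (Or.inr hx.prop) hfin
  exact (step J x hJ hadd).2 (ih _ hlt hJ' rfl)

end IsFullHeap

namespace IsFullHeap

variable {P E : Type*} [PartialOrder E] [LocallyFiniteOrder E] {A : P → P → ℤ} {eps : E → P}
  {I J : Set E} {x : E}

lemma charge_union_singleton (hA : IsGCM A) (hE : IsFullHeap A eps) (hJ : IsProperIdeal eps J)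
    (hx : IsAddable eps J (eps x) x) (p : P) :
    charge A eps p (J ∪ {x}) = charge A eps p J - A p (eps x) := by
  by_cases hxp : eps x = p
  · subst hxp
    rw [(hE.charge_eq_zero_iff hA (hE.isProperIdeal_union_singleton hJ hx)).2
      ⟨x, hx.isRemovable_union hJ.1⟩, (hE.charge_eq_two_iff hA hJ).2 ⟨x, hx⟩, hA.1]
    norm_num
  obtain ⟨a, b, hg⟩ := hE.exists_isFibreGap hJ p
  classical
  rw [(hg.union_singleton hxp).charge_eq, hg.charge_eq, Finset.sum_filter, Finset.sum_filter]
  refine (Finset.sum_congr rfl (g := fun c => (if c ∈ J then -A p (eps c) else 0) +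
    if c = x then -A p (eps c) else 0) fun c _ => ?_).trans ?_
  · by_cases hc : c = x <;> simp [hc, hx.1]
  rw [Finset.sum_add_distrib, Finset.sum_ite_eq']
  split_ifs with hxI
  · ring
  · rw [not_imp_comm.1 (hg.mem_Ioo_of_isAddable hE hJ.1 hx hxp) hxI]
    ring

lemma charge_add_sum_chiFn [Fintype P] (hA : IsGCM A) (hE : IsFullHeap A eps)
    (hI : IsProperIdeal eps I) (hJ : IsProperIdeal eps J) (p : P) :
    charge A eps p J + ∑ t, A p t * chiFn eps I J t = charge A eps p I := by
  classical
  refine hE.properIdeal_induction hI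
    (motive := fun J => charge A eps p J + ∑ t, A p t * chiFn eps I J t = charge A eps p I)
    (by simp [chiFn_self]) (fun J x hJ hx => ?_) hJ
  have hsum : ∑ t, A p t * chiFn eps I (J ∪ {x}) t =
      ∑ t, A p t * chiFn eps I J t + A p (eps x) := by
    rw [hE.chiFn_union_singleton hI hJ hx.1]
    simp [mul_add, Finset.sum_add_distrib, Pi.single_apply]
  rw [hsum, hE.charge_union_singleton hA hJ hx]
  constructor <;> intro h <;> linarith

lemma chiFn_Sact [DecidableEq P] (hA : IsGCM A) (hE : IsFullHeap A eps)
    (hI : IsProperIdeal eps I) (hJ : IsProperIdeal eps J) (p : P) :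
    chiFn eps I (Sact eps p J) = chiFn eps I J + Pi.single p (charge A eps p J - 1) := by
  by_cases h₁ : ∃ x, IsRemovable eps J p x
  · obtain ⟨x, hx⟩ := h₁
    have hJ' := hE.isProperIdeal_diff_singleton hJ hx
    have h := hE.chiFn_union_singleton hI hJ' (x := x) fun h => h.2 rfl
    rw [show J \ {x} ∪ {x} = J by simp [hx.1], hx.2.1] at h
    rw [hE.Sact_of_isRemovable hx, h, (hE.charge_eq_zero_iff hA hJ).2 ⟨x, hx⟩, add_assoc,
      ← Pi.single_add]
    simp
  by_cases h₂ : ∃ x, IsAddable eps J p x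
  · obtain ⟨x, hx⟩ := h₂
    rw [hE.Sact_of_isAddable hA hJ hx, hE.chiFn_union_singleton hI hJ hx.1, hx.2.1,
      (hE.charge_eq_two_iff hA hJ).2 ⟨x, hx⟩]
    norm_num
  have h0 := (hE.charge_eq_zero_iff hA hJ (p := p)).not.2 h₁
  have h2 := (hE.charge_eq_two_iff hA hJ (p := p)).not.2 h₂
  have h1 : charge A eps p J = 1 := by
    have := hE.charge_nonneg hA hJ p
    have := hE.charge_le_two hA hJ p
    omega
  rw [Sact_of_not_exists h₁ h₂, h1]
  simp

end IsFullHeap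

def affineRefl {P : Type*} [Fintype P] [DecidableEq P] (A : P → P → ℤ) (p : P) (κ : ℤ)
    (v : P → ℤ) : P → ℤ :=
  reflAct A p v + Pi.single p κ

lemma affineRefl_single_add_single {P : Type*} [Fintype P] [DecidableEq P] {A : P → P → ℤ}
    (hA : IsGCM A) {p q : P} (hpq : p ≠ q) (κ x y : ℤ) :
    affineRefl A p κ (Pi.single p x + Pi.single q y) =
      Pi.single p (κ - x - A p q * y) + Pi.single q y := by
  funext r
  by_cases hrp : r = p
  · subst hrp
    have hsum :
        ∑ t, A r t * (Pi.single r x + Pi.single q y : P → ℤ) t = 2 * x + A r q * y := by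
      simp [Pi.single_apply, mul_add, Finset.sum_add_distrib, hA.1 r]
    rw [affineRefl, Pi.add_apply, reflAct, if_pos rfl, hsum]
    simp only [Pi.add_apply, Pi.single_eq_same, Pi.single_eq_of_ne hpq]
    ring
  · simp [affineRefl, reflAct, hrp]

/-- `affineRefl A p κp ∘ affineRefl A q κq` on the plane spanned by `e_p, e_q`, in the
coordinates `(v p, v q)`, with `a = A p q` and `b = A q p`. -/
def dihedralStep (a b κp κq : ℤ) (v : ℤ × ℤ) : ℤ × ℤ :=
  (κp - v.1 - a * (κq - v.2 - b * v.1), κq - v.2 - b * v.1)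

lemma semiconj_dihedralStep {P : Type*} [Fintype P] [DecidableEq P] {A : P → P → ℤ}
    (hA : IsGCM A) {p q : P} (hpq : p ≠ q) (κp κq : ℤ) :
    Function.Semiconj (fun v : ℤ × ℤ => Pi.single p v.1 + Pi.single q v.2)
      (dihedralStep (A p q) (A q p) κp κq) (affineRefl A p κp ∘ affineRefl A q κq) := by
  rintro ⟨x, y⟩
  simp only [Function.comp_apply, dihedralStep]
  rw [add_comm (Pi.single p x : P → ℤ), affineRefl_single_add_single hA hpq.symm,
    add_comm (Pi.single q _ : P → ℤ), affineRefl_single_add_single hA hpq]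

lemma dihedralStep_iterate_two (κp κq : ℤ) : (dihedralStep 0 0 κp κq)^[2] 0 = 0 := by
  simp [dihedralStep]

lemma dihedralStep_iterate_three {a b : ℤ} (h : a * b = 1) (κp κq : ℤ) :
    (dihedralStep a b κp κq)^[3] 0 = 0 := by
  simp only [Function.iterate_succ, Function.iterate_zero, Function.comp_apply, id, dihedralStep,
    Prod.ext_iff, Prod.fst_zero, Prod.snd_zero]
  constructor
  · linear_combination (-κp + 2 * a * κq + a * b * κp - a ^ 2 * b * κq) * h
  · linear_combination (-κq - b * κp + a * b * κq) * h

lemma dihedralStep_iterate_four {a b : ℤ} (h : a * b = 2) (κp κq : ℤ) :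
    (dihedralStep a b κp κq)^[4] 0 = 0 := by
  simp only [Function.iterate_succ, Function.iterate_zero, Function.comp_apply, id, dihedralStep,
    Prod.ext_iff, Prod.fst_zero, Prod.snd_zero]
  constructor
  · linear_combination (-a * κq - 2 * a * b * κp + 3 * a ^ 2 * b * κq + a ^ 2 * b ^ 2 * κp
      - a ^ 3 * b ^ 2 * κq) * h
  · linear_combination (b * κp - 2 * a * b * κq - a * b ^ 2 * κp + a ^ 2 * b ^ 2 * κq) * h

namespace IsFullHeap

variable {P E : Type*} [PartialOrder E] [LocallyFiniteOrder E] {A : P → P → ℤ} {eps : E → P}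

noncomputable def sPerm (hA : IsGCM A) (hE : IsFullHeap A eps) (p : P) :
    Equiv.Perm {I : Set E // IsProperIdeal eps I} :=
  Function.Involutive.toPerm (fun J => ⟨Sact eps p J.1, hE.isProperIdeal_Sact J.2 p⟩)
    fun J => Subtype.ext (hE.Sact_Sact hA J.2 p)

lemma semiconj_chiFn_sPerm [Fintype P] [DecidableEq P] (hA : IsGCM A) (hE : IsFullHeap A eps)
    (I : {I : Set E // IsProperIdeal eps I}) (p : P) :
    Function.Semiconj (fun J : {I : Set E // IsProperIdeal eps I} => chiFn eps I.1 J.1)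
      (hE.sPerm hA p) (affineRefl A p (charge A eps p I.1 - 1)) := by
  intro J
  change chiFn eps I.1 (Sact eps p J.1) = _
  rw [hE.chiFn_Sact hA I.2 J.2, ← hE.charge_add_sum_chiFn hA I.2 J.2 p]
  funext r
  by_cases hrp : r = p
  · subst hrp
    simp only [affineRefl, reflAct, Pi.add_apply, if_pos, Pi.single_eq_same]
    ring
  · simp [affineRefl, reflAct, hrp]

lemma sPerm_mul_sPerm_pow_eq_one [Fintype P] (hA : IsGCM A) (hE : IsFullHeap A eps) {p q : P}
    (hpq : p ≠ q) {m : ℕ} (hm : ∀ κp κq, (dihedralStep (A p q) (A q p) κp κq)^[m] 0 = 0) :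
    (hE.sPerm hA p * hE.sPerm hA q) ^ m = 1 := by
  classical
  refine Equiv.ext fun I => Subtype.ext (hE.eq_of_chiFn_eq_zero I.2 (Subtype.property _) ?_).symm
  set κp := charge A eps p I.1 - 1
  set κq := charge A eps q I.1 - 1
  have hχ := ((hE.semiconj_chiFn_sPerm hA I p).comp_right
    (hE.semiconj_chiFn_sPerm hA I q)).iterate_right m I
  have hplane := (semiconj_dihedralStep hA hpq κp κq).iterate_right m 0
  simp only [Prod.fst_zero, Prod.snd_zero, Pi.single_zero, add_zero, hm] at hplane
  rw [Equiv.Perm.coe_pow, Equiv.Perm.coe_mul]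
  exact hχ.trans (by rw [chiFn_self, ← hplane])

lemma lift_sPerm_weylRels [Fintype P] (hA : IsGCM A) (hE : IsFullHeap A eps) :
    ∀ r ∈ weylRels A, FreeGroup.lift (hE.sPerm hA) r = 1 := by
  have hne {p q : P} (h : A p q * A q p ≠ 4) : p ≠ q := by
    rintro rfl
    rw [hA.1] at h
    norm_num at h
  rintro r (⟨p, rfl⟩ | ⟨p, q, h, rfl⟩ | ⟨p, q, h, rfl⟩ | ⟨p, q, h, rfl⟩) <;>
    simp only [map_pow, map_mul, FreeGroup.lift_apply_of]
  · exact Equiv.ext fun I => Subtype.ext (hE.Sact_Sact hA I.2 p)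
  · refine hE.sPerm_mul_sPerm_pow_eq_one hA (hne (by simp [h])) fun κp κq => ?_
    rw [h, (hA.2.2.1 p q).1 h]
    exact dihedralStep_iterate_two κp κq
  · exact hE.sPerm_mul_sPerm_pow_eq_one hA (hne (by rw [h]; norm_num))
      (dihedralStep_iterate_three h)
  · exact hE.sPerm_mul_sPerm_pow_eq_one hA (hne (by rw [h]; norm_num))
      (dihedralStep_iterate_four h)

lemma exists_apply_eq [Finite P] (hA : IsGCM A) (hE : IsFullHeap A eps)
    (act : WeylGroup A →* Equiv.Perm {I : Set E // IsProperIdeal eps I})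
    (hact : ∀ (p : P) (I : {I : Set E // IsProperIdeal eps I}),
      (act (PresentedGroup.of p) I).val = Sact eps p I.val)
    (I J : {I : Set E // IsProperIdeal eps I}) : ∃ w, act w I = J := by
  obtain ⟨J, hJ⟩ := J
  refine hE.properIdeal_induction I.2
    (motive := fun J => ∀ hJ : IsProperIdeal eps J, ∃ w, act w I = ⟨J, hJ⟩)
    (fun _ => ⟨1, by simp⟩) (fun J x hJ hx => ?_) hJ hJ
  have hJx := hE.isProperIdeal_union_singleton hJ hx
  have hup : act (PresentedGroup.of (eps x)) ⟨J, hJ⟩ = ⟨J ∪ {x}, hJx⟩ :=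
    Subtype.ext ((hact _ _).trans (hE.Sact_of_isAddable hA hJ hx))
  have hdown : act (PresentedGroup.of (eps x)) ⟨J ∪ {x}, hJx⟩ = ⟨J, hJ⟩ := by
    refine Subtype.ext ((hact _ _).trans ?_)
    rw [hE.Sact_of_isRemovable (hx.isRemovable_union hJ.1)]
    simp [hx.1]
  constructor
  · intro h _
    obtain ⟨w, hw⟩ := h hJ
    exact ⟨PresentedGroup.of (eps x) * w, by rw [map_mul, Equiv.Perm.mul_apply, hw, hup]⟩
  · intro h _
    obtain ⟨w, hw⟩ := h hJx
    exact ⟨PresentedGroup.of (eps x) * w, by rw [map_mul, Equiv.Perm.mul_apply, hw, hdown]⟩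

end IsFullHeap

/-- Each `S_p` is a permutation of the set `B` of proper
ideals; these permutations satisfy the defining relations of the Weyl group,
so there is a unique action of `W` on `B` with `s_p · I = S_p(I)`; moreover
this action is transitive. -/
theorem stmt4 {P E : Type*} [Fintype P] [PartialOrder E] [LocallyFiniteOrder E]
    {A : P → P → ℤ} {eps : E → P}
    (hA : IsGCM A) (hE : IsFullHeap A eps) :
    (∀ p : P, Set.BijOn (Sact eps p) {I : Set E | IsProperIdeal eps I}
      {I : Set E | IsProperIdeal eps I}) ∧
    (∃! act : WeylGroup A →* Equiv.Perm {I : Set E // IsProperIdeal eps I},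
      ∀ (p : P) (I : {I : Set E // IsProperIdeal eps I}),
        (act (PresentedGroup.of p) I).val = Sact eps p I.val) ∧
    (∀ act : WeylGroup A →* Equiv.Perm {I : Set E // IsProperIdeal eps I},
      (∀ (p : P) (I : {I : Set E // IsProperIdeal eps I}),
        (act (PresentedGroup.of p) I).val = Sact eps p I.val) →
      ∀ I J : {I : Set E // IsProperIdeal eps I}, ∃ w : WeylGroup A, act w I = J) := by
  have hmaps (p : P) :
      Set.MapsTo (Sact eps p) {I | IsProperIdeal eps I} {I | IsProperIdeal eps I} :=
    fun _ hJ => hE.isProperIdeal_Sact hJ p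
  have hinv (p : P) : Set.InvOn (Sact eps p) (Sact eps p) {I | IsProperIdeal eps I}
      {I | IsProperIdeal eps I} :=
    ⟨fun _ hJ => hE.Sact_Sact hA hJ p, fun _ hJ => hE.Sact_Sact hA hJ p⟩
  have hof (p : P) (I : {I : Set E // IsProperIdeal eps I}) :
      (PresentedGroup.toGroup (hE.lift_sPerm_weylRels hA) (PresentedGroup.of p) I).val =
        Sact eps p I.val := by
    rw [PresentedGroup.toGroup.of]
    rfl
  refine ⟨fun p => (hinv p).bijOn (hmaps p) (hmaps p),
    ⟨PresentedGroup.toGroup (hE.lift_sPerm_weylRels hA), hof, fun act hact => ?_⟩,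
    fun act hact => hE.exists_apply_eq hA act hact⟩
  exact PresentedGroup.ext fun p => Equiv.ext fun I => Subtype.ext ((hact p I).trans (hof p I).symm)
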